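/- For a single unordered character on a rooted tree with labelled leaves, the set of states achieving the minimum conditional subtree cost at an internal node u with children of upper sets VU(v1),…,VU(vd) is exactly {A : k(A) = K}, where k(A) = |{i : A ∈ VU(vi)}| and K = max_A k(A); moreover the states achieving cost exactly one more than the minimum (among states not in the upper set) include exactly {A : k(A) = K − 1}. -/

import Mathlib

open scoped Classical

/-- Rooted trees with leaves labelled by states from `S`. -/
inductive RTree (S : Type) where
  | leaf : S → RTree S
  | node : List (RTree S) → RTree S

/-- The conditional MP-cost of the subtree `t` given that its root receives
state `A` (⊤ means infeasible, i.e. a leaf forced to a different label):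
the minimum number of differing-endpoint edges over assignments extending the
leaf labels with the root fixed to `A`. -/
noncomputable def condCost {S : Type} : RTree S → S → ℕ∞
  | .leaf s, A => if A = s then 0 else ⊤
  | .node ts, A =>
      (ts.attach.map (fun t => ⨅ B : S, (condCost t.1 B + if A = B then 0 else 1))).sum
  decreasing_by
    simp_wf
    have := List.sizeOf_lt_of_mem t.2
    omega

/-- The (unconditional) MP-cost of the subtree `t`. -/
noncomputable def subMP {S : Type} (t : RTree S) : ℕ∞ := ⨅ A : S, condCost t A

/-- The upper set `VU(t)`: states achieving the minimum conditional cost. -/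
noncomputable def upperSet {S : Type} (t : RTree S) : Set S :=
  {A | condCost t A = subMP t}

/-- `k(A)`: the number of children whose upper set contains `A`. -/
noncomputable def kCount {S : Type} (ts : List (RTree S)) (A : S) : ℕ :=
  (ts.map (fun t => if A ∈ upperSet t then 1 else 0)).sum

/-! Over the edge to a child `t`, the parent state `A` costs `subMP t` if `A ∈ upperSet t` and
`subMP t + 1` otherwise, since a state of `upperSet t` is always available at the price of one
change. Hence `condCost (node ts) A + k(A)` is the constant `Σ subMP t + ts.length`: minimizing the cost
means maximizing `k`, and the cost exceeds its minimum by exactly `K - k(A)`. -/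

lemma list_sum_ne_top {l : List ℕ∞} (h : ∀ x ∈ l, x ≠ ⊤) : l.sum ≠ ⊤ :=
  List.sum_induction (· ≠ ⊤) (fun _ _ ha hb => WithTop.add_ne_top.2 ⟨ha, hb⟩) ENat.zero_ne_top h

lemma iInf_add_sup_eq_of_add_eq {ι : Type*} [Fintype ι] [Nonempty ι] {f : ι → ℕ∞} {g : ι → ℕ}
    {c : ℕ∞} (h : ∀ i, f i + g i = c) : (⨅ i, f i) + (Finset.univ.sup g : ℕ) = c := by
  obtain ⟨i₀, hi₀⟩ := Finite.exists_min f
  obtain ⟨i₁, -, hi₁⟩ := Finset.exists_mem_eq_sup Finset.univ Finset.univ_nonempty g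
  have hmin : ⨅ i, f i = f i₀ := le_antisymm (iInf_le f i₀) (le_iInf hi₀)
  refine le_antisymm ?_ ?_
  · calc (⨅ i, f i) + (Finset.univ.sup g : ℕ) ≤ f i₁ + g i₁ := by
          rw [hi₁]; gcongr; exact iInf_le f i₁
      _ = c := h i₁
  · calc c = f i₀ + g i₀ := (h i₀).symm
      _ ≤ (⨅ i, f i) + (Finset.univ.sup g : ℕ) := by
          rw [hmin]; gcongr; exact Finset.le_sup (Finset.mem_univ i₀)

lemma ENat.eq_add_iff_of_add_eq {a b c : ℕ∞} {p q d : ℕ} (hc : c ≠ ⊤) (ha : a + p = c)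
    (hb : b + q = c) : a = b + d ↔ q = p + d := by
  lift c to ℕ using hc
  lift a to ℕ using ne_top_of_le_ne_top (ENat.natCast_ne_top c) (ha ▸ le_self_add)
  lift b to ℕ using ne_top_of_le_ne_top (ENat.natCast_ne_top c) (hb ▸ le_self_add)
  norm_cast at ha hb ⊢
  omega

variable {S : Type}

lemma subMP_le_condCost (t : RTree S) (A : S) : subMP t ≤ condCost t A := iInf_le _ _

lemma exists_mem_upperSet [Finite S] [Nonempty S] (t : RTree S) : ∃ A, A ∈ upperSet t := by
  obtain ⟨A, hA⟩ := Finite.exists_min (condCost t)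
  exact ⟨A, le_antisymm (le_iInf hA) (iInf_le _ A)⟩

lemma iInf_condCost_add_ite [Finite S] [Nonempty S] (t : RTree S) (A : S) :
    ⨅ B, condCost t B + (if A = B then 0 else 1) =
      subMP t + if A ∈ upperSet t then 0 else 1 := by
  by_cases hA : A ∈ upperSet t
  · refine le_antisymm ?_ (le_iInf fun B => ?_)
    · rw [if_pos hA, add_zero, ← show condCost t A = subMP t from hA]
      simpa using iInf_le (fun B => condCost t B + if A = B then 0 else 1) A
    · simpa [hA] using le_add_right (subMP_le_condCost t B)
  · obtain ⟨B₀, hB₀⟩ := exists_mem_upperSet t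
    have hAB₀ : A ≠ B₀ := by rintro rfl; exact hA hB₀
    refine le_antisymm ?_ (le_iInf fun B => ?_)
    · simpa [hA, hAB₀, hB₀.symm] using iInf_le (fun B => condCost t B + if A = B then 0 else 1) B₀
    · rw [if_neg hA]
      by_cases hAB : A = B
      · subst hAB
        simpa using Order.add_one_le_of_lt (lt_of_le_of_ne (subMP_le_condCost t A) (Ne.symm hA))
      · simpa [hAB] using add_le_add_right (subMP_le_condCost t B) 1

lemma condCost_node [Finite S] [Nonempty S] (ts : List (RTree S)) (A : S) :
    condCost (.node ts) A = (ts.map fun t => subMP t + if A ∈ upperSet t then 0 else 1).sum := by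
  rw [condCost, List.attach_map_val (f := fun t => ⨅ B, condCost t B + if A = B then 0 else 1)]
  exact congrArg List.sum (List.map_congr_left fun t _ => iInf_condCost_add_ite t A)

lemma condCost_node_add_kCount [Finite S] [Nonempty S] (ts : List (RTree S)) (A : S) :
    condCost (.node ts) A + kCount ts A = (ts.map subMP).sum + ts.length := by
  have hchild : ∀ t : RTree S, (subMP t + if A ∈ upperSet t then 0 else 1) +
      ((if A ∈ upperSet t then 1 else 0 : ℕ) : ℕ∞) = subMP t + 1 := fun t => by
    split_ifs <;> simp [add_comm]
  rw [condCost_node, kCount, Nat.cast_list_sum, List.map_map, ← List.sum_map_add]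
  simp only [Function.comp_apply, hchild, List.sum_map_add]
  simp

theorem subMP_ne_top [Finite S] [Nonempty S] : ∀ t : RTree S, subMP t ≠ ⊤
  | .leaf s => ne_top_of_le_ne_top (by simp [condCost]) (subMP_le_condCost (.leaf s) s)
  | .node ts => by
    have hsum : (ts.map subMP).sum + ts.length ≠ ⊤ := by
      refine WithTop.add_ne_top.2 ⟨?_, ENat.natCast_ne_top _⟩
      exact list_sum_ne_top (List.forall_mem_map.2 fun t ht => subMP_ne_top t)
    exact ne_top_of_le_ne_top hsum <| (subMP_le_condCost _ (Classical.arbitrary S)).trans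
      (condCost_node_add_kCount ts _ ▸ le_self_add)
  decreasing_by
    have := List.sizeOf_lt_of_mem ht
    simp_wf
    omega

lemma sum_map_subMP_ne_top [Finite S] [Nonempty S] (ts : List (RTree S)) :
    (ts.map subMP).sum ≠ ⊤ :=
  list_sum_ne_top (List.forall_mem_map.2 fun t _ => subMP_ne_top t)

lemma one_le_sup_kCount [Fintype S] [Nonempty S] {ts : List (RTree S)} (hts : ts ≠ []) :
    1 ≤ Finset.univ.sup (kCount ts) := by
  obtain ⟨t, ts', rfl⟩ := List.exists_cons_of_ne_nil hts
  obtain ⟨A, hA⟩ := exists_mem_upperSet t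
  have hkCount : kCount (t :: ts') A = 1 + kCount ts' A := by simp [kCount, hA]
  exact (hkCount ▸ Nat.le_add_right 1 _).trans (Finset.le_sup (Finset.mem_univ A))

/-- Hartigan's characterization of the optimal and next-to-optimal state sets
at an internal node with children `ts`: the upper set is `{A | k(A) = K}`, and
the states outside the upper set achieving cost exactly one more than the
minimum are exactly `{A | k(A) = K - 1}`. -/
theorem hartigan_upper_lower_sets {S : Type} [Fintype S] [Nonempty S]
    (ts : List (RTree S)) (hts : ts ≠ []) :
    upperSet (RTree.node ts) =
      {A | kCount ts A = Finset.univ.sup (fun B : S => kCount ts B)} ∧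
    {A | A ∉ upperSet (RTree.node ts) ∧
        condCost (RTree.node ts) A = subMP (RTree.node ts) + 1} =
      {A | kCount ts A = Finset.univ.sup (fun B : S => kCount ts B) - 1} := by
  set K := Finset.univ.sup (fun B : S => kCount ts B)
  have hc : (ts.map subMP).sum + ts.length ≠ ⊤ :=
    WithTop.add_ne_top.2 ⟨sum_map_subMP_ne_top ts, ENat.natCast_ne_top _⟩
  have hcost := condCost_node_add_kCount ts
  have hmin : subMP (.node ts) + K = (ts.map subMP).sum + ts.length :=
    iInf_add_sup_eq_of_add_eq hcost
  -- `K - 1` is truncated subtraction: without children, `K = 0`.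
  have hK : 1 ≤ K := one_le_sup_kCount hts
  have hcost_eq_add (A : S) (d : ℕ) :=
    ENat.eq_add_iff_of_add_eq (d := d) hc (hcost A) hmin
  refine ⟨Set.ext fun A => ?_, Set.ext fun A => ?_⟩
  · simpa [upperSet, eq_comm] using hcost_eq_add A 0
  · have hcost_eq := hcost_eq_add A 0
    have hcost_eq_succ := hcost_eq_add A 1
    simp only [Nat.cast_zero, add_zero, Nat.cast_one] at hcost_eq hcost_eq_succ
    simp only [upperSet, Set.mem_ofPred_eq, hcost_eq, hcost_eq_succ]
    omega
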